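/- Let f ∈ 𝒟 (the closed span of Koopman eigenfunctions) and g ∈ 𝒟^⊥ be such that the product fg lies in L²(X,μ). Then fg lies in 𝒟^⊥, i.e., fg is orthogonal to every Koopman eigenfunction. -/

import Mathlib

/-!
For an ergodic map, the modulus of a Koopman eigenfunction is invariant, hence a.e. constant, so
eigenfunctions are bounded; and `w * conj φ` is an eigenfunction whenever `w` and `φ` are.
Hence for an eigenfunction `w`, the function `w * conj g` lies in `L²` and is orthogonal to `𝒟`,
because `⟪φ, w * conj g⟫ = ⟪g, w * conj φ⟫ = 0` for every eigenfunction `φ`.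
Since `f ∈ 𝒟`, this gives `⟪w, f * g⟫ = ⟪w * conj g, f⟫ = 0`.
-/

open MeasureTheory Filter

/-- The closed subspace `𝒟` of `L²(X,μ)` spanned by the eigenfunctions of the Koopman
operator `f ↦ f ∘ T`. -/
noncomputable def eigSpan {X : Type*} [MeasurableSpace X] (μ : Measure X) (T : X → X) :
    Submodule ℂ (Lp ℂ 2 μ) :=
  (Submodule.span ℂ {w : Lp ℂ 2 μ | ∃ l : ℂ,
    (fun x => (w : X → ℂ) (T x)) =ᵐ[μ] fun x => l * (w : X → ℂ) x}).topologicalClosure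

open scoped ComplexConjugate InnerProductSpace ENNReal

section Koopman

variable {X : Type*} [MeasurableSpace X] {μ : Measure X} {T : X → X}

def IsKoopmanEigenfunction (μ : Measure X) (T : X → X) (φ : X → ℂ) (l : ℂ) : Prop :=
  (fun x => φ (T x)) =ᵐ[μ] fun x => l * φ x

namespace IsKoopmanEigenfunction

variable {φ ψ : X → ℂ} {l m : ℂ}

lemma mul (hφ : IsKoopmanEigenfunction μ T φ l) (hψ : IsKoopmanEigenfunction μ T ψ m) :
    IsKoopmanEigenfunction μ T (fun x => φ x * ψ x) (l * m) := by
  filter_upwards [hφ, hψ] with x hφx hψx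
  rw [hφx, hψx]
  ring

lemma star (hφ : IsKoopmanEigenfunction μ T φ l) :
    IsKoopmanEigenfunction μ T (fun x => star (φ x)) (star l) := by
  filter_upwards [hφ] with x hx
  rw [hx, star_mul']

lemma congr_ae (hT : Measure.QuasiMeasurePreserving T μ μ)
    (hφ : IsKoopmanEigenfunction μ T φ l) (h : φ =ᵐ[μ] ψ) : IsKoopmanEigenfunction μ T ψ l := by
  filter_upwards [hT.ae_eq_comp h, hφ, h] with x hTx hφx hx
  rw [← hx, ← hφx]
  exact hTx.symm

lemma norm_eq_one (hT : MeasurePreserving T μ μ) (hφ : IsKoopmanEigenfunction μ T φ l)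
    {p : ℝ≥0∞} (hp : p ≠ 0) (hφp : MemLp φ p μ) (hφ0 : ¬φ =ᵐ[μ] 0) : ‖l‖ = 1 := by
  have hnorm : ‖l‖ₑ * eLpNorm φ p μ = eLpNorm φ p μ := by
    calc ‖l‖ₑ * eLpNorm φ p μ = eLpNorm (l • φ) p μ := (eLpNorm_const_smul l φ p μ).symm
      _ = eLpNorm (φ ∘ T) p μ := eLpNorm_congr_ae hφ.symm
      _ = eLpNorm φ p μ := eLpNorm_comp_measurePreserving hφp.1 hT
  have hne : eLpNorm φ p μ ≠ 0 := fun h => hφ0 ((eLpNorm_eq_zero_iff hφp.1 hp).1 h)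
  have hl : ‖l‖ₑ = 1 := (ENNReal.mul_eq_right hne hφp.eLpNorm_ne_top).1 hnorm
  simpa [enorm_eq_nnnorm, ← coe_nnnorm] using hl

lemma exists_norm_ae_eq_const (hT : Ergodic T μ) (hφ : IsKoopmanEigenfunction μ T φ l)
    {p : ℝ≥0∞} (hp : p ≠ 0) (hφp : MemLp φ p μ) : ∃ c : ℝ, ∀ᵐ x ∂μ, ‖φ x‖ = c := by
  by_cases hφ0 : φ =ᵐ[μ] 0
  · exact ⟨0, by filter_upwards [hφ0] with x hx; simp [hx]⟩
  have hl := hφ.norm_eq_one hT.toMeasurePreserving hp hφp hφ0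
  have hinv : (fun x => ‖φ x‖) ∘ T =ᵐ[μ] fun x => ‖φ x‖ := by
    filter_upwards [hφ] with x hx
    simp [Function.comp_apply, hx, hl]
  exact hT.ae_eq_const_of_ae_eq_comp_ae hφp.1.norm hinv

lemma memLp_top (hT : Ergodic T μ) (hφ : IsKoopmanEigenfunction μ T φ l)
    {p : ℝ≥0∞} (hp : p ≠ 0) (hφp : MemLp φ p μ) : MemLp φ ∞ μ := by
  obtain ⟨c, hc⟩ := hφ.exists_norm_ae_eq_const hT hp hφp
  exact memLp_top_of_bound hφp.1 c (hc.mono fun x hx => hx.le)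

end IsKoopmanEigenfunction

lemma MeasureTheory.L2.inner_congr_ae {u v u' v' : Lp ℂ 2 μ}
    (h : ∀ᵐ x ∂μ, conj (u x) * v x = conj (u' x) * v' x) : ⟪u, v⟫_ℂ = ⟪u', v'⟫_ℂ := by
  rw [L2.inner_def, L2.inner_def]
  refine integral_congr_ae (h.mono fun x hx => ?_)
  simp only [RCLike.inner_apply]
  rw [mul_comm, hx, mul_comm]

lemma mem_eigSpan {w : Lp ℂ 2 μ} {l : ℂ} (hw : IsKoopmanEigenfunction μ T w l) :
    w ∈ eigSpan μ T :=
  Submodule.le_topologicalClosure _ (Submodule.subset_span ⟨l, hw⟩)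

lemma toLp_mem_eigSpan (hT : Measure.QuasiMeasurePreserving T μ μ) {φ : X → ℂ} {l : ℂ}
    (hφ : MemLp φ 2 μ) (hφl : IsKoopmanEigenfunction μ T φ l) : hφ.toLp φ ∈ eigSpan μ T :=
  mem_eigSpan (hφl.congr_ae hT hφ.coeFn_toLp.symm)

lemma mem_eigSpan_orthogonal_iff {v : Lp ℂ 2 μ} :
    v ∈ (eigSpan μ T)ᗮ ↔
      ∀ (w : Lp ℂ 2 μ) (l : ℂ), IsKoopmanEigenfunction μ T w l → ⟪w, v⟫_ℂ = 0 := by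
  rw [eigSpan, Submodule.orthogonal_closure, ← Submodule.span_singleton_le_iff_mem,
    ← Submodule.isOrtho_iff_le, Submodule.isOrtho_comm, Submodule.isOrtho_span]
  simp only [Set.mem_ofPred_eq, Set.mem_singleton_iff, forall_eq, forall_exists_index]
  rfl

lemma toLp_mul_star_mem_eigSpan_orthogonal (hT : Measure.QuasiMeasurePreserving T μ μ)
    {w g : X → ℂ} {l : ℂ} (hw : IsKoopmanEigenfunction μ T w l) (hw_top : MemLp w ∞ μ)
    (hg : MemLp g 2 μ) (hgD : hg.toLp g ∈ (eigSpan μ T)ᗮ) :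
    (hg.star.mul' (r := 2) hw_top).toLp (fun x => w x * star (g x)) ∈ (eigSpan μ T)ᗮ := by
  rw [mem_eigSpan_orthogonal_iff]
  intro φ m hφ
  have hwg : MemLp (fun x => w x * star (g x)) 2 μ := hg.star.mul' hw_top
  have hwφ : MemLp (fun x => w x * star (φ x)) 2 μ := (Lp.memLp φ).star.mul' hw_top
  calc ⟪φ, hwg.toLp _⟫_ℂ = ⟪hg.toLp g, hwφ.toLp _⟫_ℂ := by
        refine L2.inner_congr_ae ?_
        filter_upwards [hwg.coeFn_toLp, hg.coeFn_toLp, hwφ.coeFn_toLp] with x hwgx hgx hwφx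
        rw [hwgx, hgx, hwφx, RCLike.star_def]
        ring
    _ = 0 :=
      Submodule.inner_left_of_mem_orthogonal (toLp_mem_eigSpan hT hwφ (hw.mul hφ.star)) hgD

end Koopman

theorem product_discrete_continuous_in_continuous_general
    {X : Type*} [MeasurableSpace X] (μ : Measure X)
    (T : X → X) (hT : Ergodic T μ)
    (f g : X → ℂ) (hf : MemLp f 2 μ) (hg : MemLp g 2 μ)
    (hfg : MemLp (fun x => f x * g x) 2 μ)
    (hfD : hf.toLp f ∈ eigSpan μ T)
    (hgD : hg.toLp g ∈ (eigSpan μ T)ᗮ) :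
    hfg.toLp (fun x => f x * g x) ∈ (eigSpan μ T)ᗮ := by
  rw [mem_eigSpan_orthogonal_iff]
  intro w l hw
  have hw_top : MemLp w ∞ μ := hw.memLp_top hT two_ne_zero (Lp.memLp w)
  have hwg : MemLp (fun x => w x * star (g x)) 2 μ := hg.star.mul' hw_top
  have hwgD := toLp_mul_star_mem_eigSpan_orthogonal
    hT.toMeasurePreserving.quasiMeasurePreserving hw hw_top hg hgD
  calc ⟪w, hfg.toLp _⟫_ℂ = ⟪hwg.toLp _, hf.toLp f⟫_ℂ := by
        refine L2.inner_congr_ae ?_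
        filter_upwards [hfg.coeFn_toLp, hwg.coeFn_toLp, hf.coeFn_toLp] with x hfgx hwgx hfx
        rw [hfgx, hwgx, hfx, map_mul]
        simp only [RCLike.star_def, RCLike.conj_conj]
        ring
    _ = 0 := Submodule.inner_left_of_mem_orthogonal hfD hwgD

/-- If `f ∈ 𝒟`, `g ∈ 𝒟^⊥`, and the product `f * g` lies in `L²`, then `f * g ∈ 𝒟^⊥`. -/
theorem product_discrete_continuous_in_continuous
    {X : Type*} [MeasurableSpace X] (μ : Measure X) [IsProbabilityMeasure μ]
    (T : X → X) (hT : Ergodic T μ)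
    (S : X → X) (hS : MeasurePreserving S μ μ)
    (hST : Function.LeftInverse S T) (hTS : Function.RightInverse S T)
    (f g : X → ℂ) (hf : MemLp f 2 μ) (hg : MemLp g 2 μ)
    (hfg : MemLp (fun x => f x * g x) 2 μ)
    (hfD : hf.toLp f ∈ eigSpan μ T)
    (hgD : hg.toLp g ∈ (eigSpan μ T)ᗮ) :
    hfg.toLp (fun x => f x * g x) ∈ (eigSpan μ T)ᗮ :=
  product_discrete_continuous_in_continuous_general μ T hT f g hf hg hfg hfD hgD
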